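/- arXiv:math/9908087 — 6 statements merged into one kernel-verified Lean document; each statement's English description precedes it below -/
import Mathlib

section
/- Let R be a commutative ring, P ∈ F(R)^{n×m}, and suppose C is an R-stabilizing controller of P, i.e., det(Eₙ+PC) is a nonzerodivisor of R and H(P,C) ∈ R^{(m+n)×(m+n)}. Writing H(P,C) = [[H₁₁, H₁₂],[H₂₁, H₂₂]] with H₁₁ ∈ R^{n×n}, H₂₂ ∈ R^{m×m}, we have C = H₂₂⁻¹ H₂₁ = H₂₁ H₁₁⁻¹ (over F(R)), and also C = −[O E_m] H(P,C)⁻¹ [Eₙ; O]. -/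
open Matrix

/-- If C is an R-stabilizing controller of P (det(Eₙ+PC) a nonzerodivisor of R and
H(P,C) over R), then C = H₂₂⁻¹H₂₁ = H₂₁H₁₁⁻¹ = −[O Eₘ]·H(P,C)⁻¹·[Eₙ; O]. -/
theorem controller_from_H {R : Type*} [CommRing R] {n m : ℕ}
    (P : Matrix (Fin n) (Fin m) (FractionRing R))
    (C : Matrix (Fin m) (Fin n) (FractionRing R))
    (H : Matrix (Fin n ⊕ Fin m) (Fin n ⊕ Fin m) (FractionRing R))
    (hH : H = fromBlocks (1 + P * C)⁻¹ (-(P * (1 + C * P)⁻¹))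
        (C * (1 + P * C)⁻¹) (1 + C * P)⁻¹)
    (hdet : ∃ d ∈ nonZeroDivisors R,
      algebraMap R (FractionRing R) d = (1 + P * C).det)
    (hover : ∃ H' : Matrix (Fin n ⊕ Fin m) (Fin n ⊕ Fin m) R,
      H'.map (algebraMap R (FractionRing R)) = H) :
    C = (H.toBlocks₂₂)⁻¹ * H.toBlocks₂₁ ∧
      C = H.toBlocks₂₁ * (H.toBlocks₁₁)⁻¹ ∧
      C = -((H⁻¹).toBlocks₂₁) := by
  obtain ⟨d, hd, hdeq⟩ := hdet
  have hA : IsUnit (1 + P * C).det := by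
    rw [← hdeq]
    exact (IsLocalization.map_units (FractionRing R) (⟨d, hd⟩ : nonZeroDivisors R))
  have hB : IsUnit (1 + C * P).det := by
    rwa [← Matrix.det_one_add_mul_comm]
  have key : (1 + P * C) * P = P * (1 + C * P) := by
    rw [Matrix.add_mul, Matrix.mul_add, Matrix.one_mul, Matrix.mul_one, Matrix.mul_assoc]
  have key2 : C * (1 + P * C) = (1 + C * P) * C := by
    rw [Matrix.add_mul, Matrix.mul_add, Matrix.one_mul, Matrix.mul_one, Matrix.mul_assoc]
  have hPi : P * (1 + C * P)⁻¹ = (1 + P * C)⁻¹ * P := by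
    have h := congrArg (fun X => (1 + P * C)⁻¹ * X * (1 + C * P)⁻¹) key
    simp only [Matrix.nonsing_inv_mul_cancel_left _ _ hA, ← Matrix.mul_assoc,
      Matrix.mul_nonsing_inv_cancel_right _ _ hB] at h
    exact h
  have hCi : C * (1 + P * C)⁻¹ = (1 + C * P)⁻¹ * C := by
    have h := congrArg (fun X => (1 + C * P)⁻¹ * X * (1 + P * C)⁻¹) key2
    simp only [Matrix.nonsing_inv_mul_cancel_left _ _ hB, ← Matrix.mul_assoc,
      Matrix.mul_nonsing_inv_cancel_right _ _ hA] at h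
    exact h.symm
  subst hH
  rw [Matrix.toBlocks_fromBlocks₁₁, Matrix.toBlocks_fromBlocks₂₁, Matrix.toBlocks_fromBlocks₂₂]
  refine ⟨?_, ?_, ?_⟩
  · rw [Matrix.nonsing_inv_nonsing_inv _ hB, hCi, ← Matrix.mul_assoc,
      Matrix.mul_nonsing_inv _ hB, Matrix.one_mul]
  · rw [Matrix.nonsing_inv_nonsing_inv _ hA, Matrix.mul_assoc,
      Matrix.nonsing_inv_mul _ hA, Matrix.mul_one]
  · have e11 : (1 + P * C)⁻¹ * (1 : Matrix (Fin n) (Fin n) (FractionRing R))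
        + -(P * (1 + C * P)⁻¹) * (-C) = 1 := by
      rw [Matrix.mul_one, Matrix.neg_mul, Matrix.mul_neg, neg_neg, hPi]
      calc (1 + P * C)⁻¹ + (1 + P * C)⁻¹ * P * C
          = (1 + P * C)⁻¹ * (1 + P * C) := by
            rw [Matrix.mul_add, Matrix.mul_one, Matrix.mul_assoc]
        _ = 1 := Matrix.nonsing_inv_mul _ hA
    have e12 : (1 + P * C)⁻¹ * P
        + -(P * (1 + C * P)⁻¹) * (1 : Matrix (Fin m) (Fin m) (FractionRing R)) = 0 := by
      rw [Matrix.mul_one, hPi]; simp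
    have e21 : C * (1 + P * C)⁻¹ * (1 : Matrix (Fin n) (Fin n) (FractionRing R))
        + (1 + C * P)⁻¹ * (-C) = 0 := by
      rw [Matrix.mul_one, hCi]; simp
    have e22 : C * (1 + P * C)⁻¹ * P
        + (1 + C * P)⁻¹ * (1 : Matrix (Fin m) (Fin m) (FractionRing R)) = 1 := by
      rw [Matrix.mul_one, hCi]
      calc (1 + C * P)⁻¹ * C * P + (1 + C * P)⁻¹
          = (1 + C * P)⁻¹ * (1 + C * P) := by
            rw [Matrix.mul_add, Matrix.mul_one, Matrix.mul_assoc, add_comm]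
        _ = 1 := Matrix.nonsing_inv_mul _ hB
    have hinv : (fromBlocks (1 + P * C)⁻¹ (-(P * (1 + C * P)⁻¹))
        (C * (1 + P * C)⁻¹) (1 + C * P)⁻¹) *
        (fromBlocks 1 P (-C) 1) = 1 := by
      rw [Matrix.fromBlocks_multiply, e11, e12, e21, e22, ← Matrix.fromBlocks_one]
    rw [Matrix.inv_eq_right_inv hinv, Matrix.toBlocks_fromBlocks₂₁, neg_neg]
end

section
/- With the doubly coprime setup [[X̃₀, Ỹ₀],[Ñ, −D̃]]·[[D, Y₀],[N, −X₀]] = E_{m+n}: every pair (X̃, Ỹ) of matrices over R with ỸN + X̃D = Eₘ is of the form X̃ = X̃₀ − RÑ, Ỹ = Ỹ₀ + RD̃ for some R ∈ R^{m×n}, and every pair (X, Y) over R with ÑY + D̃X = Eₙ is of the form X = X₀ − NS, Y = Y₀ + DS for some S ∈ R^{m×n}. -/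
open Matrix

/-- Youla–Kučera: under the doubly coprime identity, every Bezout pair (X̃, Ỹ) with
ỸN + X̃D = Eₘ is of the form X̃ = X̃₀ − RÑ, Ỹ = Ỹ₀ + RD̃, and every pair (X, Y) with
ÑY + D̃X = Eₙ is of the form X = X₀ − NS, Y = Y₀ + DS. -/
theorem all_bezout_pairs_parameterized {A : Type*} [CommRing A] {n m : ℕ}
    (N Nt : Matrix (Fin n) (Fin m) A)
    (D Xt0 : Matrix (Fin m) (Fin m) A)
    (Dt X0 : Matrix (Fin n) (Fin n) A)
    (Yt0 Y0 : Matrix (Fin m) (Fin n) A)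
    (hD : D.det ∈ nonZeroDivisors A) (hDt : Dt.det ∈ nonZeroDivisors A)
    (P : Matrix (Fin n) (Fin m) (FractionRing A))
    (hPright : P = N.map (algebraMap A (FractionRing A)) *
        (D.map (algebraMap A (FractionRing A)))⁻¹)
    (hPleft : P = (Dt.map (algebraMap A (FractionRing A)))⁻¹ *
        Nt.map (algebraMap A (FractionRing A)))
    (hBezR : Yt0 * N + Xt0 * D = 1)
    (hBezL : Nt * Y0 + Dt * X0 = 1)
    (hdc : fromBlocks Xt0 Yt0 Nt (-Dt) * fromBlocks D Y0 N (-X0) = 1) :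
    (∀ (Xt : Matrix (Fin m) (Fin m) A) (Yt : Matrix (Fin m) (Fin n) A),
        Yt * N + Xt * D = 1 →
          ∃ R : Matrix (Fin m) (Fin n) A, Xt = Xt0 - R * Nt ∧ Yt = Yt0 + R * Dt) ∧
    (∀ (X : Matrix (Fin n) (Fin n) A) (Y : Matrix (Fin m) (Fin n) A),
        Nt * Y + Dt * X = 1 →
          ∃ S : Matrix (Fin m) (Fin n) A, X = X0 - N * S ∧ Y = Y0 + D * S) := by
  have hdc' : fromBlocks D Y0 N (-X0) * fromBlocks Xt0 Yt0 Nt (-Dt) = 1 :=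
    mul_eq_one_comm.mp hdc
  rw [Matrix.fromBlocks_multiply, ← Matrix.fromBlocks_one] at hdc'
  have h11 : D * Xt0 + Y0 * Nt = 1 := by
    have := congrArg Matrix.toBlocks₁₁ hdc'
    simpa only [Matrix.toBlocks_fromBlocks₁₁] using this
  have h12 : D * Yt0 + Y0 * (-Dt) = 0 := by
    have := congrArg Matrix.toBlocks₁₂ hdc'
    simpa only [Matrix.toBlocks_fromBlocks₁₂] using this
  have h21 : N * Xt0 + (-X0) * Nt = 0 := by
    have := congrArg Matrix.toBlocks₂₁ hdc'
    simpa only [Matrix.toBlocks_fromBlocks₂₁] using this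
  have h22 : N * Yt0 + (-X0) * (-Dt) = 1 := by
    have := congrArg Matrix.toBlocks₂₂ hdc'
    simpa only [Matrix.toBlocks_fromBlocks₂₂] using this
  have hYN : Y0 * Nt = 1 - D * Xt0 := by rw [eq_sub_iff_add_eq, add_comm]; exact h11
  have hXN : X0 * Nt = N * Xt0 := by
    rw [Matrix.neg_mul, add_neg_eq_zero] at h21; exact h21.symm
  have hYD : Y0 * Dt = D * Yt0 := by
    rw [Matrix.mul_neg, add_neg_eq_zero] at h12; exact h12.symm
  have hXD : X0 * Dt = 1 - N * Yt0 := by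
    rw [Matrix.neg_mul, Matrix.mul_neg, neg_neg] at h22; rw [eq_sub_iff_add_eq, add_comm]; exact h22
  have hDX : D * Xt0 = 1 - Y0 * Nt := by rw [hYN]; abel
  have hNY : N * Yt0 = 1 - X0 * Dt := by rw [hXD]; abel
  constructor
  · intro Xt Yt hBez
    have hX : Xt * D = 1 - Yt * N := by rw [eq_sub_iff_add_eq, add_comm]; exact hBez
    have e1 : Xt * Y0 * Nt = Xt - Xt * D * Xt0 := by
      rw [Matrix.mul_assoc, hYN, Matrix.mul_sub, Matrix.mul_one, Matrix.mul_assoc]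
    have e2 : Yt * X0 * Nt = Yt * N * Xt0 := by
      rw [Matrix.mul_assoc, hXN, Matrix.mul_assoc]
    have e3 : Xt * Y0 * Dt = Xt * D * Yt0 := by
      rw [Matrix.mul_assoc, hYD, Matrix.mul_assoc]
    have e4 : Yt * X0 * Dt = Yt - Yt * N * Yt0 := by
      rw [Matrix.mul_assoc, hXD, Matrix.mul_sub, Matrix.mul_one, Matrix.mul_assoc]
    refine ⟨-(Xt * Y0 - Yt * X0), ?_, ?_⟩
    · rw [Matrix.neg_mul, Matrix.sub_mul, e1, e2, hX, Matrix.sub_mul, Matrix.one_mul]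
      abel
    · rw [Matrix.neg_mul, Matrix.sub_mul, e3, e4, hX, Matrix.sub_mul, Matrix.one_mul]
      abel
  · intro X Y hBez
    have hBX : Dt * X = 1 - Nt * Y := by rw [eq_sub_iff_add_eq, add_comm]; exact hBez
    have e5 : N * (Xt0 * Y) = X0 * (Nt * Y) := by
      rw [← Matrix.mul_assoc, ← hXN, Matrix.mul_assoc]
    have e6 : N * (Yt0 * X) = X - X0 * (Dt * X) := by
      rw [← Matrix.mul_assoc, hNY, Matrix.sub_mul, Matrix.one_mul, Matrix.mul_assoc]
    have e7 : D * (Xt0 * Y) = Y - Y0 * (Nt * Y) := by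
      rw [← Matrix.mul_assoc, hDX, Matrix.sub_mul, Matrix.one_mul, Matrix.mul_assoc]
    have e8 : D * (Yt0 * X) = Y0 * (Dt * X) := by
      rw [← Matrix.mul_assoc, ← hYD, Matrix.mul_assoc]
    refine ⟨Xt0 * Y - Yt0 * X, ?_, ?_⟩
    · rw [Matrix.mul_sub, e5, e6, hBX, Matrix.mul_sub, Matrix.mul_one]
      abel
    · rw [Matrix.mul_sub, e7, e8, hBX, Matrix.mul_sub, Matrix.mul_one]
      abel
end

section
/- Under the doubly coprime identity [[X̃₀, Ỹ₀],[Ñ, −D̃]]·[[D, Y₀],[N, −X₀]] = E_{m+n}, for every S ∈ R^{m×n} the two block matrices Ĥ(S) = [[Eₙ − N(Ỹ₀+SD̃), −N(X̃₀−SÑ)],[D(Ỹ₀+SD̃), D(X̃₀−SÑ)]] and Ĥ′(S) = [[(X₀−NS)D̃, −(X₀−NS)Ñ],[(Y₀+DS)D̃, Eₘ − (Y₀+DS)Ñ]] are equal. -/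
open Matrix

/-- Under the doubly coprime identity, the two block expressions Ĥ(S) and Ĥ′(S)
for the closed-loop transfer matrix coincide for every parameter S. -/
theorem Hhat_eq_Hhat' {A : Type*} [CommRing A] {n m : ℕ}
    (N Nt : Matrix (Fin n) (Fin m) A)
    (D Xt0 : Matrix (Fin m) (Fin m) A)
    (Dt X0 : Matrix (Fin n) (Fin n) A)
    (Yt0 Y0 : Matrix (Fin m) (Fin n) A)
    (hdc : fromBlocks Xt0 Yt0 Nt (-Dt) * fromBlocks D Y0 N (-X0) = 1) :
    ∀ S : Matrix (Fin m) (Fin n) A,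
      fromBlocks (1 - N * (Yt0 + S * Dt)) (-(N * (Xt0 - S * Nt)))
          (D * (Yt0 + S * Dt)) (D * (Xt0 - S * Nt))
        = fromBlocks ((X0 - N * S) * Dt) (-((X0 - N * S) * Nt))
            ((Y0 + D * S) * Dt) (1 - (Y0 + D * S) * Nt) := by
  intro S
  have hdc' : fromBlocks D Y0 N (-X0) * fromBlocks Xt0 Yt0 Nt (-Dt) = 1 :=
    mul_eq_one_comm.mp hdc
  rw [Matrix.fromBlocks_multiply, ← Matrix.fromBlocks_one] at hdc'
  have e11 : D * Xt0 + Y0 * Nt = 1 := congrArg Matrix.toBlocks₁₁ hdc'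
  have e12 : D * Yt0 + Y0 * (-Dt) = 0 := congrArg Matrix.toBlocks₁₂ hdc'
  have e21 : N * Xt0 + (-X0) * Nt = 0 := congrArg Matrix.toBlocks₂₁ hdc'
  have e22 : N * Yt0 + (-X0) * (-Dt) = 1 := congrArg Matrix.toBlocks₂₂ hdc'
  have E1 : X0 * Dt = 1 - N * Yt0 := by
    rw [Matrix.neg_mul, Matrix.mul_neg, neg_neg] at e22; exact eq_sub_of_add_eq' e22
  have E2 : X0 * Nt = N * Xt0 := by
    rw [Matrix.neg_mul, add_neg_eq_zero] at e21; exact e21.symm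
  have E3 : Y0 * Dt = D * Yt0 := by
    rw [Matrix.mul_neg, add_neg_eq_zero] at e12; exact e12.symm
  have E4 : Y0 * Nt = 1 - D * Xt0 := eq_sub_of_add_eq' e11
  have b11 : (1 : Matrix (Fin n) (Fin n) A) - N * (Yt0 + S * Dt) = (X0 - N * S) * Dt := by
    rw [Matrix.mul_add, Matrix.sub_mul, E1, Matrix.mul_assoc]; abel
  have b12 : -(N * (Xt0 - S * Nt)) = -((X0 - N * S) * Nt) := by
    rw [Matrix.mul_sub, Matrix.sub_mul, ← E2, Matrix.mul_assoc]
  have b21 : D * (Yt0 + S * Dt) = (Y0 + D * S) * Dt := by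
    rw [Matrix.mul_add, Matrix.add_mul, E3, Matrix.mul_assoc]
  have b22 : D * (Xt0 - S * Nt) = (1 : Matrix (Fin m) (Fin m) A) - (Y0 + D * S) * Nt := by
    rw [Matrix.mul_sub, Matrix.add_mul, E4, Matrix.mul_assoc]; abel
  rw [b11, b12, b21, b22]
end

section
/- With the setup of the doubly coprime identity and Ĥ(R) = [[Eₙ − N(Ỹ₀+RD̃), −N(X̃₀−RÑ)],[D(Ỹ₀+RD̃), D(X̃₀−RÑ)]], the factorization Ĥ(R) = [[Eₙ, O],[O, D]] · [[Eₙ − N(Ỹ₀+RD̃), −N],[Ỹ₀+RD̃, Eₘ]] · [[Eₙ, O],[O, X̃₀−RÑ]] holds; consequently det Ĥ(R) = det(D) · det([[Eₙ − N(Ỹ₀+RD̃), −N],[Ỹ₀+RD̃, Eₘ]]) · det(X̃₀−RÑ), and the middle determinant equals 1, so Ĥ(R) is nonsingular over R if and only if X̃₀ − RÑ is nonsingular over R. -/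
open Matrix

/-- Factorization of Ĥ(R), the consequent determinant formula (whose middle factor has
determinant 1), and the conclusion that Ĥ(R) is nonsingular iff X̃₀ − RÑ is. -/
theorem Hhat_factorization_and_nonsingularity {A : Type*} [CommRing A] {n m : ℕ}
    (N Nt : Matrix (Fin n) (Fin m) A)
    (D Xt0 : Matrix (Fin m) (Fin m) A)
    (Dt X0 : Matrix (Fin n) (Fin n) A)
    (Yt0 Y0 : Matrix (Fin m) (Fin n) A)
    (hD : D.det ∈ nonZeroDivisors A)
    (hdc : fromBlocks Xt0 Yt0 Nt (-Dt) * fromBlocks D Y0 N (-X0) = 1) :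
    ∀ R : Matrix (Fin m) (Fin n) A,
      fromBlocks (1 - N * (Yt0 + R * Dt)) (-(N * (Xt0 - R * Nt)))
          (D * (Yt0 + R * Dt)) (D * (Xt0 - R * Nt))
        = fromBlocks 1 0 0 D *
            fromBlocks (1 - N * (Yt0 + R * Dt)) (-N) (Yt0 + R * Dt) 1 *
            fromBlocks 1 0 0 (Xt0 - R * Nt) ∧
      (fromBlocks (1 - N * (Yt0 + R * Dt)) (-(N * (Xt0 - R * Nt)))
          (D * (Yt0 + R * Dt)) (D * (Xt0 - R * Nt))).det
        = D.det * (fromBlocks (1 - N * (Yt0 + R * Dt)) (-N) (Yt0 + R * Dt) 1).det *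
            (Xt0 - R * Nt).det ∧
      (fromBlocks (1 - N * (Yt0 + R * Dt)) (-N) (Yt0 + R * Dt) 1).det = 1 ∧
      ((fromBlocks (1 - N * (Yt0 + R * Dt)) (-(N * (Xt0 - R * Nt)))
          (D * (Yt0 + R * Dt)) (D * (Xt0 - R * Nt))).det ∈ nonZeroDivisors A ↔
        (Xt0 - R * Nt).det ∈ nonZeroDivisors A) := by
  intro R
  have h1 : fromBlocks (1 - N * (Yt0 + R * Dt)) (-(N * (Xt0 - R * Nt)))
        (D * (Yt0 + R * Dt)) (D * (Xt0 - R * Nt))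
      = fromBlocks 1 0 0 D *
          fromBlocks (1 - N * (Yt0 + R * Dt)) (-N) (Yt0 + R * Dt) 1 *
          fromBlocks 1 0 0 (Xt0 - R * Nt) := by
    simp [fromBlocks_multiply, Matrix.mul_assoc, Matrix.neg_mul]
  have h3 : (fromBlocks (1 - N * (Yt0 + R * Dt)) (-N) (Yt0 + R * Dt) 1).det = 1 := by
    rw [det_fromBlocks_one₂₂]
    have : 1 - N * (Yt0 + R * Dt) - -N * (Yt0 + R * Dt) = 1 := by
      rw [Matrix.neg_mul, sub_neg_eq_add, sub_add_cancel]
    rw [this, det_one]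
  have h2 : (fromBlocks (1 - N * (Yt0 + R * Dt)) (-(N * (Xt0 - R * Nt)))
        (D * (Yt0 + R * Dt)) (D * (Xt0 - R * Nt))).det
      = D.det * (fromBlocks (1 - N * (Yt0 + R * Dt)) (-N) (Yt0 + R * Dt) 1).det *
          (Xt0 - R * Nt).det := by
    rw [h1, det_mul, det_mul, det_fromBlocks_zero₁₂, det_fromBlocks_zero₁₂, det_one,
      one_mul, one_mul]
  refine ⟨h1, h2, h3, ?_⟩
  rw [h2, h3, mul_one]
  constructor
  · intro h
    exact ((mul_mem_nonZeroDivisors).mp h).2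
  · intro h
    exact mul_mem hD h
end

section
/- In the doubly coprime setting with Ĥ(R) = [[Eₙ − N(Ỹ₀+RD̃), −N(X̃₀−RÑ)],[D(Ỹ₀+RD̃), D(X̃₀−RÑ)]] and Ω(Q) = (H₀ − [[Eₙ,O],[O,O]]) Q (H₀ − [[O,O],[O,Eₘ]]) + H₀ where H₀ = Ĥ(O), the images of Ω and Ĥ coincide: { Ω(Q) : Q ∈ R^{(m+n)×(m+n)} } = { Ĥ(R) : R ∈ R^{m×n} }. -/
open Matrix

/-- The images of the parameterizations Ω and Ĥ coincide:
{Ω(Q) : Q} = {Ĥ(R) : R}. -/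
theorem range_Omega_eq_range_Hhat {A : Type*} [CommRing A] {n m : ℕ}
    (N Nt : Matrix (Fin n) (Fin m) A)
    (D Xt0 : Matrix (Fin m) (Fin m) A)
    (Dt X0 : Matrix (Fin n) (Fin n) A)
    (Yt0 Y0 : Matrix (Fin m) (Fin n) A)
    (hD : D.det ∈ nonZeroDivisors A) (hDt : Dt.det ∈ nonZeroDivisors A)
    (hdc : fromBlocks Xt0 Yt0 Nt (-Dt) * fromBlocks D Y0 N (-X0) = 1)
    (Hhat : Matrix (Fin m) (Fin n) A → Matrix (Fin n ⊕ Fin m) (Fin n ⊕ Fin m) A)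
    (hHhat : ∀ R, Hhat R = fromBlocks (1 - N * (Yt0 + R * Dt)) (-(N * (Xt0 - R * Nt)))
        (D * (Yt0 + R * Dt)) (D * (Xt0 - R * Nt)))
    (H0 : Matrix (Fin n ⊕ Fin m) (Fin n ⊕ Fin m) A) (hH0 : H0 = Hhat 0)
    (Ω : Matrix (Fin n ⊕ Fin m) (Fin n ⊕ Fin m) A →
        Matrix (Fin n ⊕ Fin m) (Fin n ⊕ Fin m) A)
    (hΩ : ∀ Q, Ω Q = (H0 - fromBlocks 1 0 0 0) * Q * (H0 - fromBlocks 0 0 0 1) + H0) :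
    Set.range Ω = Set.range Hhat := by
  have hdc' : fromBlocks D Y0 N (-X0) * fromBlocks Xt0 Yt0 Nt (-Dt) = 1 :=
    mul_eq_one_comm.mp hdc
  rw [Matrix.fromBlocks_multiply, ← Matrix.fromBlocks_one] at hdc hdc'
  have e1 : Xt0 * D + Yt0 * N = 1 := by
    have := congrArg Matrix.toBlocks₁₁ hdc
    simp only [Matrix.toBlocks_fromBlocks₁₁] at this
    exact this
  have e2 : Nt * Y0 + Dt * X0 = 1 := by
    have := congrArg Matrix.toBlocks₂₂ hdc
    simp only [Matrix.toBlocks_fromBlocks₂₂] at this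
    rwa [Matrix.neg_mul, Matrix.mul_neg, neg_neg] at this
  have f1 : D * Xt0 + Y0 * Nt = 1 := by
    have := congrArg Matrix.toBlocks₁₁ hdc'
    simp only [Matrix.toBlocks_fromBlocks₁₁] at this
    exact this
  have f2 : D * Yt0 - Y0 * Dt = 0 := by
    have := congrArg Matrix.toBlocks₁₂ hdc'
    simp only [Matrix.toBlocks_fromBlocks₁₂] at this
    rwa [Matrix.mul_neg, ← sub_eq_add_neg] at this
  have f3 : N * Xt0 - X0 * Nt = 0 := by
    have := congrArg Matrix.toBlocks₂₁ hdc'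
    simp only [Matrix.toBlocks_fromBlocks₂₁] at this
    rwa [Matrix.neg_mul, ← sub_eq_add_neg] at this
  have f4 : N * Yt0 + X0 * Dt = 1 := by
    have := congrArg Matrix.toBlocks₂₂ hdc'
    simp only [Matrix.toBlocks_fromBlocks₂₂] at this
    rwa [Matrix.neg_mul, Matrix.mul_neg, neg_neg] at this
  have key1 : H0 - fromBlocks 1 0 0 0 = fromRows (-N) D * fromCols Yt0 Xt0 := by
    rw [hH0, hHhat, Matrix.fromRows_mul_fromCols, sub_eq_iff_eq_add,
      Matrix.fromBlocks_add, Matrix.fromBlocks_inj]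
    refine ⟨?_, ?_, ?_, ?_⟩
    · simp only [Matrix.zero_mul, add_zero, Matrix.neg_mul]
      abel
    · simp only [Matrix.zero_mul, sub_zero, add_zero, Matrix.neg_mul]
    · simp
    · simp only [Matrix.zero_mul, sub_zero, add_zero]
  have key2 : H0 - fromBlocks 0 0 0 1 = fromRows X0 Y0 * fromCols Dt (-Nt) := by
    rw [hH0, hHhat, Matrix.fromRows_mul_fromCols, sub_eq_iff_eq_add,
      Matrix.fromBlocks_add, Matrix.fromBlocks_inj]
    refine ⟨?_, ?_, ?_, ?_⟩
    · simp only [Matrix.zero_mul, add_zero]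
      rw [← f4]; abel
    · simp only [Matrix.zero_mul, sub_zero, add_zero, Matrix.mul_neg]
      rw [sub_eq_zero] at f3
      rw [f3]
    · simp only [Matrix.zero_mul, add_zero]
      rw [sub_eq_zero] at f2
      exact f2
    · simp only [Matrix.zero_mul, sub_zero, Matrix.mul_neg]
      rw [← f1]; abel
  have key3 : ∀ R, Hhat R = fromRows (-N) D * R * fromCols Dt (-Nt) + H0 := by
    intro R
    rw [hH0, hHhat, hHhat, Matrix.fromRows_mul, Matrix.fromRows_mul_fromCols,
      Matrix.fromBlocks_add, Matrix.fromBlocks_inj]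
    refine ⟨?_, ?_, ?_, ?_⟩
    · simp only [Matrix.zero_mul, add_zero, Matrix.neg_mul, Matrix.mul_add, Matrix.mul_assoc]
      abel
    · simp only [Matrix.zero_mul, sub_zero, Matrix.neg_mul, Matrix.mul_neg, Matrix.mul_sub,
        Matrix.mul_assoc, neg_neg, neg_sub]
      abel
    · simp only [Matrix.zero_mul, add_zero, Matrix.mul_add, Matrix.mul_assoc]
      abel
    · simp only [Matrix.zero_mul, sub_zero, Matrix.mul_neg, Matrix.mul_sub, Matrix.mul_assoc]
      abel
  have g1 : fromCols Yt0 Xt0 * fromRows N D = 1 := by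
    rw [Matrix.fromCols_mul_fromRows, add_comm, e1]
  have g2 : fromCols Dt Nt * fromRows X0 Y0 = 1 := by
    rw [Matrix.fromCols_mul_fromRows, add_comm, e2]
  ext H
  simp only [Set.mem_range]
  constructor
  · rintro ⟨Q, rfl⟩
    refine ⟨fromCols Yt0 Xt0 * Q * fromRows X0 Y0, ?_⟩
    rw [key3, hΩ, key1, key2]
    simp only [Matrix.mul_assoc]
  · rintro ⟨R, rfl⟩
    refine ⟨fromRows N D * R * fromCols Dt Nt, ?_⟩
    rw [hΩ, key1, key2, key3]
    congr 1
    calc fromRows (-N) D * fromCols Yt0 Xt0 * (fromRows N D * R * fromCols Dt Nt) *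
          (fromRows X0 Y0 * fromCols Dt (-Nt))
        = fromRows (-N) D * ((fromCols Yt0 Xt0 * fromRows N D) * (R *
            ((fromCols Dt Nt * fromRows X0 Y0) * fromCols Dt (-Nt)))) := by
          simp only [Matrix.mul_assoc]
      _ = fromRows (-N) D * R * fromCols Dt (-Nt) := by
          rw [g1, g2, Matrix.one_mul, Matrix.one_mul, Matrix.mul_assoc]
end

section
/- Let A be a commutative ring, P ∈ F(A)^{n×m} with two right fractions P = A₁B₁⁻¹ = A₂B₂⁻¹ where A₁, A₂ ∈ A^{n×m} and B₁, B₂ ∈ A^{m×m} nonsingular. Then the A-modules generated by the rows of the stacked matrices [A₁; B₁] and [A₂; B₂] (as submodules of A^{1×(m+n)} after a common identification via F(A)) are isomorphic. -/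
open Matrix

/-- The row module of a stacked fraction of P is independent, up to isomorphism, of
the chosen right fraction P = A₁B₁⁻¹ = A₂B₂⁻¹. -/
theorem rowModule_welldefined {A : Type*} [CommRing A] {n m : ℕ}
    (A₁ A₂ : Matrix (Fin n) (Fin m) A) (B₁ B₂ : Matrix (Fin m) (Fin m) A)
    (hB₁ : B₁.det ∈ nonZeroDivisors A) (hB₂ : B₂.det ∈ nonZeroDivisors A)
    (hP : A₁.map (algebraMap A (FractionRing A)) *
            (B₁.map (algebraMap A (FractionRing A)))⁻¹
        = A₂.map (algebraMap A (FractionRing A)) *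
            (B₂.map (algebraMap A (FractionRing A)))⁻¹) :
    Nonempty
      ((Submodule.span A (Set.range fun i => Matrix.fromRows A₁ B₁ i)) ≃ₗ[A]
        (Submodule.span A (Set.range fun i => Matrix.fromRows A₂ B₂ i))) := by
  classical
  set K := FractionRing A
  set φ := algebraMap A K with hφ
  -- mapped matrices
  set A₁' := A₁.map φ
  set A₂' := A₂.map φ
  set B₁' := B₁.map φ
  set B₂' := B₂.map φ
  have hu₁ : IsUnit B₁'.det := by
    have : B₁'.det = φ B₁.det := by
      simp [B₁', RingHom.map_det]
    rw [this]
    exact IsLocalization.map_units K ⟨B₁.det, hB₁⟩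
  have hu₂ : IsUnit B₂'.det := by
    have : B₂'.det = φ B₂.det := by
      simp [B₂', RingHom.map_det]
    rw [this]
    exact IsLocalization.map_units K ⟨B₂.det, hB₂⟩
  set C : Matrix (Fin m) (Fin m) K := B₂'⁻¹ * B₁' with hC
  have hA : A₂' * C = A₁' := by
    rw [hC, ← Matrix.mul_assoc, ← hP, Matrix.mul_assoc,
      Matrix.nonsing_inv_mul _ hu₁, Matrix.mul_one]
  have hB : B₂' * C = B₁' := by
    rw [hC, ← Matrix.mul_assoc, Matrix.mul_nonsing_inv _ hu₂, Matrix.one_mul]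
  have huC : IsUnit C.det := by
    have h : B₂'.det * C.det = B₁'.det := by rw [← Matrix.det_mul, hB]
    exact isUnit_of_mul_isUnit_right (h ▸ hu₁)
  -- the injection A^m → K^m
  set f : (Fin m → A) →ₗ[A] (Fin m → K) := (Algebra.linearMap A K).compLeft (Fin m) with hf
  have hfinj : Function.Injective f := by
    intro x y hxy
    funext j
    exact IsFractionRing.injective A K (congrFun hxy j)
  -- multiplication by C on the right, as an A-linear map on K^m
  set g : (Fin m → K) →ₗ[A] (Fin m → K) :=
    (Matrix.vecMulLinear C).restrictScalars A with hg
  have hginj : Function.Injective g := by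
    intro x y hxy
    have hxy' : x ᵥ* C = y ᵥ* C := hxy
    have := congrArg (fun v : Fin m → K => v ᵥ* C⁻¹) hxy'
    rw [Matrix.vecMul_vecMul, Matrix.vecMul_vecMul, Matrix.mul_nonsing_inv _ huC] at this
    simpa [Matrix.vecMul_vecMul, Matrix.mul_nonsing_inv _ huC] using this
  -- mapped spans
  have hmap1 : (Submodule.span A (Set.range fun i => Matrix.fromRows A₁ B₁ i)).map f
      = Submodule.span A (Set.range fun i => (Matrix.fromRows A₁' B₁') i) := by
    rw [Submodule.map_span, ← Set.range_comp]
    have he : (⇑f ∘ fun i => Matrix.fromRows A₁ B₁ i) = fun i => (Matrix.fromRows A₁' B₁') i := by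
      funext i j
      cases i <;> simp [f, A₁', B₁', φ]
    rw [he]
  have hmap2 : (Submodule.span A (Set.range fun i => Matrix.fromRows A₂ B₂ i)).map f
      = Submodule.span A (Set.range fun i => (Matrix.fromRows A₂' B₂') i) := by
    rw [Submodule.map_span, ← Set.range_comp]
    have he : (⇑f ∘ fun i => Matrix.fromRows A₂ B₂ i) = fun i => (Matrix.fromRows A₂' B₂') i := by
      funext i j
      cases i <;> simp [f, A₂', B₂', φ]
    rw [he]
  have hmapg : (Submodule.span A (Set.range fun i => (Matrix.fromRows A₂' B₂') i)).map g
      = Submodule.span A (Set.range fun i => (Matrix.fromRows A₁' B₁') i) := by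
    rw [Submodule.map_span, ← Set.range_comp]
    have hM : Matrix.fromRows A₂' B₂' * C = Matrix.fromRows A₁' B₁' := by
      rw [Matrix.fromRows_mul, hA, hB]
    have he : (⇑g ∘ fun i => (Matrix.fromRows A₂' B₂') i)
        = fun i => (Matrix.fromRows A₁' B₁') i := by
      funext i j
      have := congrFun (congrFun hM i) j
      simpa [g, Matrix.vecMulLinear, Matrix.mul_apply, Matrix.vecMul, dotProduct] using this
    rw [he]
  -- assemble the equivalence
  exact ⟨(Submodule.equivMapOfInjective f hfinj _).trans <|
    (LinearEquiv.ofEq _ _ hmap1).trans <|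
    (LinearEquiv.ofEq _ _ hmapg.symm).trans <|
    (Submodule.equivMapOfInjective g hginj _).symm.trans <|
    (LinearEquiv.ofEq _ _ hmap2.symm).trans
    (Submodule.equivMapOfInjective f hfinj _).symm⟩
end
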